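/- For the function f(b) = I_{N/2}(b)/I_{N/2-1}(b) with N ≥ 2 an integer, and b > 0 the unique positive solution of b = β f(b) for β > N, one has β f'(b) < 1. -/

import Mathlib

/-!
With `ν = N / 2` and `s = (x / 2) ^ 2`, the series of `I_ν` gives
`f(x) = I_ν(x) / I_{ν-1}(x) = (x / 2) · A(s) / B(s)`, where `A` and `B` are the power series
`∑ sᵐ / (m! Γ(m + ν + 1))` and `∑ sᵐ / (m! Γ(m + ν))`. Their coefficients have ratio
`1 / (m + ν)`, decreasing in `m`, so Chebyshev's sum inequality gives `s A' B < A s B'`, i.e.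
`A / B` is strictly decreasing. Hence `f'(x) < f(x) / x`, and at a fixed point `b = β f(b)`,
where `β > 0` because `f > 0`, this reads `β f'(b) < β f(b) / b = 1`.
-/

open MeasureTheory Real Filter Asymptotics Set

open Topology

/-- Modified Bessel function of the first kind,
`I_nu(x) = sum_m (x/2)^(2m+nu) / (m! * Gamma (m+nu+1))`. -/
noncomputable def besselI (nu x : Real) : Real :=
  tsum (fun m : Nat => (x / 2) ^ (2 * (m : Real) + nu) / ((m.factorial : Real) * Real.Gamma ((m : Real) + nu + 1)))

theorem hasDerivAt_tsum_mul_pow {𝕜 : Type*} [RCLike 𝕜] {c : ℕ → 𝕜}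
    (hc : ∀ R : ℝ, Summable fun m => ‖c m‖ * R ^ m) (z : 𝕜) :
    HasDerivAt (fun w => ∑' m, c m * w ^ m) (∑' m, c m * (m * z ^ (m - 1))) z := by
  set R : ℝ := ‖z‖ + 1
  have hR : 1 ≤ R := by simp [R]
  have hz : z ∈ Metric.ball (0 : 𝕜) R := by simp [R]
  refine hasDerivAt_tsum_of_isPreconnected (hc (2 * R)) Metric.isOpen_ball
    (convex_ball 0 R).isPreconnected (fun m w _ => (hasDerivAt_pow m w).const_mul (c m))
    (fun m w hw => ?_) hz ((hc ‖z‖).of_norm_bounded fun m => by simp) hz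
  have hw : ‖w‖ ≤ R := (mem_ball_zero_iff.mp hw).le
  calc ‖c m * (m * w ^ (m - 1))‖ = ‖c m‖ * (m * ‖w‖ ^ (m - 1)) := by simp
    _ ≤ ‖c m‖ * (2 ^ m * R ^ m) := by
      gcongr
      · exact_mod_cast Nat.lt_two_pow_self.le
      · exact (pow_le_pow_left₀ (norm_nonneg w) hw _).trans (pow_le_pow_right₀ hR (m.sub_le 1))
    _ = ‖c m‖ * (2 * R) ^ m := by rw [mul_pow]

theorem summable_natCast_mul_mul_pow {c : ℕ → ℝ}
    (hc : ∀ R : ℝ, Summable fun m => ‖c m‖ * R ^ m) (t : ℝ) :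
    Summable fun m : ℕ => m * (c m * t ^ m) := by
  refine (hc (2 * |t|)).of_norm_bounded fun m => ?_
  calc ‖m * (c m * t ^ m)‖ = ‖c m‖ * (m * |t| ^ m) := by
        simp only [norm_mul, RCLike.norm_natCast, norm_eq_abs, norm_pow]
        ring
    _ ≤ ‖c m‖ * (2 ^ m * |t| ^ m) := by gcongr; exact_mod_cast Nat.lt_two_pow_self.le
    _ = ‖c m‖ * (2 * |t|) ^ m := by rw [mul_pow]

theorem mul_tsum_mul_natCast_mul_pow_sub_one (c : ℕ → ℝ) (t : ℝ) :
    t * ∑' m, c m * (m * t ^ (m - 1)) = ∑' m : ℕ, m * (c m * t ^ m) := by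
  rw [← tsum_mul_left]
  congr 1 with (_ | m)
  · simp
  · simp only [Nat.add_sub_cancel, pow_succ]
    ring

theorem mul_sub_mul_pos_of_strictAnti_div {ι : Type*} [Preorder ι] {u v : ι → ℝ}
    (hv : ∀ m, 0 < v m) (huv : StrictAnti fun m => u m / v m) {i j : ι} (hij : i < j) :
    0 < u i * v j - u j * v i := by
  have := huv hij
  rw [div_lt_div_iff₀ (hv j) (hv i)] at this
  linarith

theorem natCast_sub_mul_mul_sub_nonpos {u v : ℕ → ℝ} (hv : ∀ m, 0 < v m)
    (huv : StrictAnti fun m => u m / v m) (i j : ℕ) :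
    ((i : ℝ) - j) * (u i * v j - u j * v i) ≤ 0 := by
  rcases lt_trichotomy i j with hij | rfl | hij
  · have : (i : ℝ) < j := by exact_mod_cast hij
    nlinarith [mul_sub_mul_pos_of_strictAnti_div hv huv hij]
  · simp
  · have : (j : ℝ) < i := by exact_mod_cast hij
    nlinarith [mul_sub_mul_pos_of_strictAnti_div hv huv hij]

-- Chebyshev's sum inequality: under the weights `v`, the increasing sequence `m` and the
-- strictly decreasing sequence `u / v` are negatively correlated.
theorem tsum_natCast_mul_mul_tsum_lt {u v : ℕ → ℝ} (hu : 0 ≤ u) (hv : ∀ m, 0 < v m)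
    (huv : StrictAnti fun m => u m / v m) (hu_sum : Summable u) (hv_sum : Summable v)
    (hmu_sum : Summable fun m : ℕ => m * u m) (hmv_sum : Summable fun m : ℕ => m * v m) :
    (∑' m : ℕ, m * u m) * ∑' m, v m < (∑' m, u m) * ∑' m : ℕ, m * v m := by
  have hv0 : 0 ≤ v := fun m => (hv m).le
  have h₁ := hmu_sum.mul_of_nonneg hv_sum (fun m => mul_nonneg m.cast_nonneg (hu m)) hv0
  have h₂ := hu_sum.mul_of_nonneg hmv_sum hu (fun m => mul_nonneg m.cast_nonneg (hv0 m))
  set q : ℕ × ℕ → ℝ := fun p => p.1 * u p.1 * v p.2 - u p.1 * (p.2 * v p.2)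
  have hq : Summable q := h₁.sub h₂
  have hq_swap : Summable fun p : ℕ × ℕ => q p.swap := (Equiv.prodComm ℕ ℕ).summable_iff.mpr hq
  have hswap : ∑' p : ℕ × ℕ, q p.swap = ∑' p, q p := (Equiv.prodComm ℕ ℕ).tsum_eq q
  have hpair (p : ℕ × ℕ) :
      q p + q p.swap = ((p.1 : ℝ) - p.2) * (u p.1 * v p.2 - u p.2 * v p.1) := by
    simp only [q, Prod.fst_swap, Prod.snd_swap]
    ring
  have hsymm : ∑' p, (q p + q p.swap) < 0 := by
    refine (Summable.tsum_lt_tsum (i := (0, 1)) (fun p => ?_) ?_ (hq.add hq_swap)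
      summable_zero).trans_eq tsum_zero
    · rw [hpair]
      exact natCast_sub_mul_mul_sub_nonpos hv huv _ _
    · have := mul_sub_mul_pos_of_strictAnti_div hv huv zero_lt_one
      rw [hpair]
      push_cast
      linarith
  rw [hq.tsum_add hq_swap, hswap, h₁.tsum_sub h₂, ← hmu_sum.tsum_mul_tsum hv_sum h₁,
    ← hu_sum.tsum_mul_tsum hmv_sum h₂] at hsymm
  linarith

noncomputable def besselCoeff (ν : ℝ) (m : ℕ) : ℝ := (m.factorial * Gamma (m + ν))⁻¹

noncomputable def besselSeries (ν t : ℝ) : ℝ := ∑' m, besselCoeff ν m * t ^ m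

section besselSeries

variable {ν : ℝ}

theorem besselCoeff_pos (hν : 0 < ν) (m : ℕ) : 0 < besselCoeff ν m := by
  have := Gamma_pos_of_pos (by positivity : 0 < (m : ℝ) + ν)
  unfold besselCoeff
  positivity

theorem besselCoeff_add_one (hν : 0 < ν) (m : ℕ) :
    besselCoeff (ν + 1) m = besselCoeff ν m / (m + ν) := by
  rw [besselCoeff, besselCoeff, ← add_assoc, Gamma_add_one (by positivity)]
  field_simp

theorem besselCoeff_succ (hν : 0 < ν) (m : ℕ) :
    besselCoeff ν (m + 1) = besselCoeff ν m / ((m + 1) * (m + ν)) := by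
  rw [besselCoeff, besselCoeff, Nat.factorial_succ, Nat.cast_add_one, add_right_comm,
    Gamma_add_one (by positivity)]
  push_cast
  field_simp

theorem summable_besselCoeff_mul_pow (hν : 0 < ν) (t : ℝ) :
    Summable fun m => besselCoeff ν m * t ^ m := by
  refine summable_of_ratio_norm_eventually_le (r := 1 / 2) (by norm_num) ?_
  filter_upwards [eventually_ge_atTop ⌈2 * |t|⌉₊] with m hm
  have hm : 2 * |t| ≤ m := Nat.ceil_le.mp hm
  have hc := besselCoeff_pos hν m
  have hden : 2 * |t| ≤ (m + 1) * (m + ν) := by nlinarith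
  rw [besselCoeff_succ hν, norm_mul, norm_mul, norm_pow, norm_pow, Real.norm_of_nonneg hc.le,
    Real.norm_of_nonneg (by positivity), pow_succ, Real.norm_eq_abs]
  rw [div_mul_eq_mul_div, div_le_iff₀ (by positivity)]
  have : 0 ≤ besselCoeff ν m * |t| ^ m := by positivity
  nlinarith

theorem summable_norm_besselCoeff_mul_pow (hν : 0 < ν) (t : ℝ) :
    Summable fun m => ‖besselCoeff ν m‖ * t ^ m :=
  (summable_besselCoeff_mul_pow hν t).congr fun m => by
    rw [Real.norm_of_nonneg (besselCoeff_pos hν m).le]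

theorem besselSeries_pos (hν : 0 < ν) {t : ℝ} (ht : 0 < t) : 0 < besselSeries ν t :=
  (summable_besselCoeff_mul_pow hν t).tsum_pos
    (fun m => (mul_pos (besselCoeff_pos hν m) (pow_pos ht m)).le) 0
    (mul_pos (besselCoeff_pos hν 0) (pow_pos ht 0))

theorem hasDerivAt_besselSeries (hν : 0 < ν) (t : ℝ) :
    HasDerivAt (besselSeries ν) (∑' m, besselCoeff ν m * (m * t ^ (m - 1))) t :=
  hasDerivAt_tsum_mul_pow (summable_norm_besselCoeff_mul_pow hν) t

theorem exists_hasDerivAt_besselSeries_div_neg (hν : 0 < ν) {t : ℝ} (ht : 0 < t) :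
    ∃ r < 0, HasDerivAt (fun s => besselSeries (ν + 1) s / besselSeries ν s) r t := by
  have hν₁ : 0 < ν + 1 := by linarith
  have hB := besselSeries_pos hν ht
  refine ⟨_, ?_, (hasDerivAt_besselSeries hν₁ t).div (hasDerivAt_besselSeries hν t) hB.ne'⟩
  refine div_neg_of_neg_of_pos ?_ (by positivity)
  refine neg_of_mul_neg_right ?_ ht.le
  have := tsum_natCast_mul_mul_tsum_lt (u := fun m => besselCoeff (ν + 1) m * t ^ m)
    (v := fun m => besselCoeff ν m * t ^ m)
    (fun m => (mul_pos (besselCoeff_pos hν₁ m) (pow_pos ht m)).le)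
    (fun m => mul_pos (besselCoeff_pos hν m) (pow_pos ht m)) ?_
    (summable_besselCoeff_mul_pow hν₁ t) (summable_besselCoeff_mul_pow hν t)
    (summable_natCast_mul_mul_pow (summable_norm_besselCoeff_mul_pow hν₁) t)
    (summable_natCast_mul_mul_pow (summable_norm_besselCoeff_mul_pow hν) t)
  · rw [← mul_tsum_mul_natCast_mul_pow_sub_one, ← mul_tsum_mul_natCast_mul_pow_sub_one] at this
    unfold besselSeries
    linear_combination this
  · have hratio (m : ℕ) :
        besselCoeff (ν + 1) m * t ^ m / (besselCoeff ν m * t ^ m) = (m + ν)⁻¹ := by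
      have := besselCoeff_pos hν m
      rw [besselCoeff_add_one hν]
      field_simp
    intro i j hij
    simp only [hratio]
    gcongr

end besselSeries

theorem besselI_eq_rpow_mul_besselSeries (ν : ℝ) {x : ℝ} (hx : 0 < x) :
    besselI ν x = (x / 2) ^ ν * besselSeries (ν + 1) ((x / 2) ^ 2) := by
  rw [besselI, besselSeries, ← tsum_mul_left]
  congr 1 with m
  rw [rpow_add (by positivity), show 2 * (m : ℝ) = ((2 * m : ℕ) : ℝ) by push_cast; ring,
    rpow_natCast, pow_mul, besselCoeff, ← add_assoc]
  ring

theorem besselI_div_besselI_sub_one (ν : ℝ) {x : ℝ} (hx : 0 < x) :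
    besselI ν x / besselI (ν - 1) x
      = x / 2 * (besselSeries (ν + 1) ((x / 2) ^ 2) / besselSeries ν ((x / 2) ^ 2)) := by
  have hx₂ : 0 < x / 2 := by positivity
  have hpow : (x / 2) ^ ν = (x / 2) ^ (ν - 1) * (x / 2) := by
    rw [rpow_sub_one hx₂.ne', div_mul_cancel₀ _ hx₂.ne']
  rw [besselI_eq_rpow_mul_besselSeries ν hx, besselI_eq_rpow_mul_besselSeries (ν - 1) hx,
    sub_add_cancel, hpow, mul_assoc, mul_div_mul_left _ _ (rpow_pos_of_pos hx₂ _).ne',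
    mul_div_assoc]

theorem besselI_div_besselI_sub_one_pos {ν x : ℝ} (hν : 0 < ν) (hx : 0 < x) :
    0 < besselI ν x / besselI (ν - 1) x := by
  have hs : 0 < (x / 2) ^ 2 := by positivity
  rw [besselI_div_besselI_sub_one ν hx]
  have := besselSeries_pos (by linarith : 0 < ν + 1) hs
  have := besselSeries_pos hν hs
  positivity

theorem deriv_besselI_div_besselI_sub_one_lt {ν x : ℝ} (hν : 0 < ν) (hx : 0 < x) :
    deriv (fun y => besselI ν y / besselI (ν - 1) y) x
      < besselI ν x / besselI (ν - 1) x / x := by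
  set g : ℝ → ℝ := fun s => besselSeries (ν + 1) s / besselSeries ν s
  obtain ⟨r, hr, hg⟩ : ∃ r < 0, HasDerivAt g r ((x / 2) ^ 2) :=
    exists_hasDerivAt_besselSeries_div_neg hν (by positivity)
  have hsq : HasDerivAt (fun y : ℝ => (y / 2) ^ 2) (x / 2) x := by
    refine (((hasDerivAt_id' x).div_const 2).fun_pow 2).congr_deriv ?_
    push_cast
    ring
  have hcomp : HasDerivAt (fun y => g ((y / 2) ^ 2)) (r * (x / 2)) x := (hg.comp x hsq :)
  have hderiv : HasDerivAt (fun y => y / 2 * g ((y / 2) ^ 2))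
      (g ((x / 2) ^ 2) / 2 + r * (x / 2) ^ 2) x :=
    (((hasDerivAt_id' x).div_const 2).mul hcomp).congr_deriv (by ring)
  have hf : (fun y => besselI ν y / besselI (ν - 1) y)
      =ᶠ[𝓝 x] fun y => y / 2 * g ((y / 2) ^ 2) :=
    eventually_of_mem (Ioi_mem_nhds hx) fun y hy => besselI_div_besselI_sub_one ν hy
  rw [hf.deriv_eq, hderiv.deriv, besselI_div_besselI_sub_one ν hx,
    show x / 2 * g ((x / 2) ^ 2) / x = g ((x / 2) ^ 2) / 2 by field_simp]
  nlinarith [mul_neg_of_neg_of_pos hr (by positivity : 0 < (x / 2) ^ 2)]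

theorem stmt_18_general (N : ℕ) (hN : 2 ≤ N) (β b : ℝ) (hb : 0 < b)
    (hsol : b = β * (besselI ((N : ℝ) / 2) b / besselI ((N : ℝ) / 2 - 1) b)) :
    β * deriv (fun x => besselI ((N : ℝ) / 2) x / besselI ((N : ℝ) / 2 - 1) x) b < 1 := by
  have hν : 0 < (N : ℝ) / 2 := div_pos (by norm_cast; omega) two_pos
  have hβ : 0 < β :=
    (pos_iff_pos_of_mul_pos (hsol ▸ hb)).mpr (besselI_div_besselI_sub_one_pos hν hb)
  calc β * deriv (fun x => besselI ((N : ℝ) / 2) x / besselI ((N : ℝ) / 2 - 1) x) b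
      < β * (besselI ((N : ℝ) / 2) b / besselI ((N : ℝ) / 2 - 1) b / b) :=
        mul_lt_mul_of_pos_left (deriv_besselI_div_besselI_sub_one_lt hν hb) hβ
    _ = 1 := by rw [← mul_div_assoc, ← hsol, div_self hb.ne']

theorem stmt_18 (N : ℕ) (hN : 2 ≤ N) (β b : ℝ) (hβ : (N : ℝ) < β) (hb : 0 < b)
    (hsol : b = β * (besselI ((N : ℝ) / 2) b / besselI ((N : ℝ) / 2 - 1) b)) :
    β * deriv (fun x => besselI ((N : ℝ) / 2) x / besselI ((N : ℝ) / 2 - 1) x) b < 1 :=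
  stmt_18_general N hN β b hb hsol
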